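/- arXiv:1710.03130 — 3 statements merged into one kernel-verified Lean document; each statement's English description precedes it below -/
import Mathlib

section
/- Suppose 0 < α ≤ 1, p_1,...,p_N ∈ ℝ satisfy Σ p_j² = 1 and q_1,...,q_N ∈ ℝ satisfy Σ q_j² + (Σ λ_j² p_j²)/(Σ λ_j p_j²)² = α with Σ λ_j p_j² ≠ 0. Then Σ_{j<k}(λ_j² + λ_k²) p_j² p_k² ≤ 2 Σ_{j<k} λ_j λ_k p_j² p_k². -/
open Finset

theorem stmt_1 (N : ℕ) (α : ℝ) (hα0 : 0 < α) (hα1 : α ≤ 1)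
    (p q lam : Fin N → ℝ)
    (hp : ∑ j, (p j)^2 = 1)
    (hΛ : ∑ j, lam j * (p j)^2 ≠ 0)
    (hq : ∑ j, (q j)^2 + (∑ j, (lam j)^2 * (p j)^2) / (∑ j, lam j * (p j)^2)^2 = α) :
    ∑ j, ∑ k with j < k, ((lam j)^2 + (lam k)^2) * (p j)^2 * (p k)^2
      ≤ 2 * ∑ j, ∑ k with j < k, lam j * lam k * (p j)^2 * (p k)^2 := by
  set S := ∑ j, lam j * (p j)^2 with hS
  set T := ∑ j, (lam j)^2 * (p j)^2 with hT
  have hq2 : (0:ℝ) ≤ ∑ j, (q j)^2 := Finset.sum_nonneg fun j _ => sq_nonneg _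
  have hS2 : 0 < S^2 := by positivity
  have hST : T ≤ S^2 := by
    have h1 : T / S^2 ≤ α := by linarith
    have h2 : T ≤ α * S^2 := by
      have := (div_le_iff₀ hS2).mp h1
      linarith
    nlinarith
  set F : Fin N → Fin N → ℝ := fun j k => (lam j - lam k)^2 * (p j)^2 * (p k)^2 with hF
  have hFsymm : ∀ j k, F j k = F k j := by intro j k; simp only [hF]; ring
  -- full double sum of F
  have hfull : ∑ j, ∑ k, F j k = 2 * (T - S^2) := by
    have : ∑ j, ∑ k, F j k
        = ∑ j, ((lam j)^2 * (p j)^2 * (∑ k, (p k)^2)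
            - 2 * (lam j * (p j)^2) * (∑ k, lam k * (p k)^2)
            + (p j)^2 * (∑ k, (lam k)^2 * (p k)^2)) := by
      refine Finset.sum_congr rfl fun j _ => ?_
      rw [Finset.mul_sum, Finset.mul_sum, Finset.mul_sum, ← Finset.sum_sub_distrib,
        ← Finset.sum_add_distrib]
      refine Finset.sum_congr rfl fun k _ => ?_
      simp only [hF]; ring
    rw [this, hp]
    rw [Finset.sum_add_distrib, Finset.sum_sub_distrib]
    have hA : ∑ j, 2 * (lam j * (p j) ^ 2) * S = 2 * S ^ 2 := by
      rw [← Finset.sum_mul, ← Finset.mul_sum, ← hS]; ring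
    have hB : ∑ j, (p j) ^ 2 * T = T := by rw [← Finset.sum_mul, hp, one_mul]
    have hC : ∑ j, (lam j) ^ 2 * (p j) ^ 2 * 1 = T := by simp [hT]
    rw [hA, hB, hC]; ring
  -- relate half sum to full sum
  have hswap : ∑ j, ∑ k with k < j, F j k = ∑ j, ∑ k with j < k, F j k := by
    have e1 : ∀ j : Fin N, ∑ k with k < j, F j k = ∑ k, if k < j then F j k else 0 := by
      intro j; rw [Finset.sum_filter]
    have e2 : ∀ j : Fin N, ∑ k with j < k, F j k = ∑ k, if j < k then F j k else 0 := by
      intro j; rw [Finset.sum_filter]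
    simp only [e1, e2]
    rw [Finset.sum_comm]
    refine Finset.sum_congr rfl fun j _ => Finset.sum_congr rfl fun k _ => ?_
    by_cases h : j < k <;> simp [h, hFsymm j k]
  have hdiag : ∀ j : Fin N, F j j = 0 := by intro j; simp [hF]
  have hsplit : ∑ j, ∑ k, F j k = 2 * ∑ j, ∑ k with j < k, F j k := by
    have : ∀ j : Fin N, ∑ k, F j k
        = (∑ k with j < k, F j k) + (∑ k with k < j, F j k) := by
      intro j
      rw [← Finset.sum_filter_add_sum_filter_not Finset.univ (fun k => j < k) (F j)]
      congr 1
      have : Finset.univ.filter (fun k => ¬ j < k) = insert j (Finset.univ.filter (fun k => k < j)) := by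
        ext k
        simp [not_lt, le_iff_lt_or_eq, Finset.mem_insert, or_comm, eq_comm]
      rw [this, Finset.sum_insert (by simp), hdiag j, zero_add]
    simp only [this]
    rw [Finset.sum_add_distrib, hswap]
    ring
  have hhalf : ∑ j, ∑ k with j < k, F j k = T - S^2 := by linarith [hfull, hsplit]
  have hgoal : ∑ j, ∑ k with j < k, ((lam j)^2 + (lam k)^2) * (p j)^2 * (p k)^2
      - 2 * ∑ j, ∑ k with j < k, lam j * lam k * (p j)^2 * (p k)^2
      = ∑ j, ∑ k with j < k, F j k := by
    rw [Finset.mul_sum, ← Finset.sum_sub_distrib]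
    refine Finset.sum_congr rfl fun j _ => ?_
    rw [Finset.mul_sum, ← Finset.sum_sub_distrib]
    refine Finset.sum_congr rfl fun k _ => ?_
    simp only [hF]; ring
  linarith [hgoal, hhalf, hST]
end

section
/- With p,q ∈ ℝ^N, ⟨p,p⟩ = 1, ⟨p,q⟩ = 0, ⟨Λp,p⟩ ≠ 0, and λ not equal to any λ_j, the quantity F⁻_λ = Q_λ(Λp,p)(λ/⟨Λp,p⟩ − ⟨Λ²p,p⟩/⟨Λp,p⟩²) + Q_λ(Λp,p)Q_λ(Λq,q) − Q_λ(Λp,q)² satisfies F⁻_λ = 1 + Σ_{j=1}^N G_j/(λ − λ_j), where G_j = λ_j²p_j²/⟨Λp,p⟩ − (⟨Λ²p,p⟩/⟨Λp,p⟩²)λ_j p_j² + Σ_{k≠j} λ_j λ_k (p_j q_k − p_k q_j)²/(λ_j − λ_k). -/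
open Finset

theorem sum2_double {N : ℕ} (F : Fin N → Fin N → ℝ) :
    2 * (∑ j, ∑ k, F j k) = ∑ j, ∑ k, (F j k + F k j) := by
  rw [two_mul]
  nth_rewrite 2 [Finset.sum_comm]
  rw [← Finset.sum_add_distrib]
  exact Finset.sum_congr rfl fun j _ => (Finset.sum_add_distrib).symm

theorem sum2_symm {N : ℕ} (F G : Fin N → Fin N → ℝ)
    (h : ∀ j k, F j k + F k j = G j k + G k j) :
    ∑ j, ∑ k, F j k = ∑ j, ∑ k, G j k := by
  have h1 := sum2_double F
  have h2 := sum2_double G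
  have h3 : ∑ j, ∑ k, (F j k + F k j) = ∑ j, ∑ k, (G j k + G k j) :=
    Finset.sum_congr rfl fun j _ => Finset.sum_congr rfl fun k _ => h j k
  linarith

theorem stmt_6 (N : ℕ) (p q lam : Fin N → ℝ)
    (hne : ∀ j, lam j ≠ 0)
    (hdist : Function.Injective lam)
    (hpp : ∑ j, p j * p j = 1)
    (hpq : ∑ j, p j * q j = 0)
    (hΛpp : ∑ j, lam j * p j * p j ≠ 0)
    (lambda : ℝ) (hlam : ∀ j, lambda ≠ lam j) :
    (∑ j, lam j * p j * p j / (lambda - lam j)) *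
        (lambda / (∑ j, lam j * p j * p j)
          - (∑ j, (lam j)^2 * p j * p j) / (∑ j, lam j * p j * p j)^2)
      + (∑ j, lam j * p j * p j / (lambda - lam j)) *
          (∑ j, lam j * q j * q j / (lambda - lam j))
      - (∑ j, lam j * p j * q j / (lambda - lam j))^2
    = 1 + ∑ j, ((lam j)^2 * (p j)^2 / (∑ i, lam i * p i * p i)
          - ((∑ i, (lam i)^2 * p i * p i) / (∑ i, lam i * p i * p i)^2) * (lam j * (p j)^2)
          + ∑ k with k ≠ j, lam j * lam k * (p j * q k - p k * q j)^2 / (lam j - lam k))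
        / (lambda - lam j) := by
  have hden : ∀ j, lambda - lam j ≠ 0 := fun j => sub_ne_zero.mpr (hlam j)
  set S1 := ∑ j, lam j * p j * p j with hS1
  set S2 := ∑ j, (lam j)^2 * p j * p j with hS2
  set A := ∑ j, lam j * p j * p j / (lambda - lam j) with hAdef
  set B := ∑ j, lam j * q j * q j / (lambda - lam j) with hBdef
  set C := ∑ j, lam j * p j * q j / (lambda - lam j) with hCdef
  set T := ∑ j, (lam j)^2 * (p j)^2 / (lambda - lam j) with hTdef
  clear_value S1 S2 A B C T
  -- Lemma A : A * lambda = S1 + T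
  have hA : A * lambda = S1 + T := by
    rw [hAdef, Finset.sum_mul, hS1, hTdef, ← Finset.sum_add_distrib]
    refine Finset.sum_congr rfl fun j _ => ?_
    have hdj := hden j
    field_simp
    ring
  -- cross lemma
  have hcross : A * B - C ^ 2
      = ∑ j, (∑ k with k ≠ j,
          lam j * lam k * (p j * q k - p k * q j)^2 / (lam j - lam k)) / (lambda - lam j) := by
    have hfilter : ∀ j : Fin N,
        (∑ k with k ≠ j,
            lam j * lam k * (p j * q k - p k * q j)^2 / (lam j - lam k)) / (lambda - lam j)
        = ∑ k, (if k ≠ j then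
            lam j * lam k * (p j * q k - p k * q j)^2 / ((lam j - lam k) * (lambda - lam j))
            else 0) := by
      intro j
      rw [Finset.sum_div, Finset.sum_filter]
      refine Finset.sum_congr rfl fun k _ => ?_
      split
      · rw [div_div]
      · simp
    rw [hAdef, hBdef, hCdef, pow_two, Finset.sum_mul_sum, Finset.sum_mul_sum,
      ← Finset.sum_sub_distrib]
    simp_rw [← Finset.sum_sub_distrib]
    rw [Finset.sum_congr rfl fun j _ => hfilter j]
    refine sum2_symm _ _ fun j k => ?_
    by_cases h : j = k
    · subst h
      simp only [ne_eq, not_true_eq_false, if_false, add_zero]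
      ring
    · have hlk : lam j - lam k ≠ 0 := sub_ne_zero.mpr fun e => h (hdist e)
      have hkl : lam k - lam j ≠ 0 := sub_ne_zero.mpr fun e => h (hdist e).symm
      have hdj := hden j
      have hdk := hden k
      rw [if_pos (Ne.symm h), if_pos h]
      field_simp
      ring
  have hA' : A * (lambda / S1 - S2 / S1 ^ 2) = 1 + T / S1 - S2 / S1 ^ 2 * A := by
    have h1 : A * (lambda / S1 - S2 / S1 ^ 2) = (A * lambda) / S1 - S2 / S1 ^ 2 * A := by
      ring
    rw [h1, hA, add_div, div_self hΛpp]
  have e1 : ∑ j, (lam j)^2 * (p j)^2 / (lambda - lam j) / S1 = T / S1 := by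
    rw [hTdef, Finset.sum_div]
  have e2 : ∑ j, S2 / S1^2 * (lam j * p j * p j / (lambda - lam j)) = S2 / S1^2 * A := by
    rw [hAdef, Finset.mul_sum]
  have hRHS : (∑ j, ((lam j)^2 * (p j)^2 / S1 - S2 / S1^2 * (lam j * (p j)^2)
          + ∑ k with k ≠ j, lam j * lam k * (p j * q k - p k * q j)^2 / (lam j - lam k))
        / (lambda - lam j))
      = T / S1 - S2 / S1 ^ 2 * A + (A * B - C ^ 2) := by
    calc ∑ j, ((lam j)^2 * (p j)^2 / S1 - S2 / S1^2 * (lam j * (p j)^2)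
            + ∑ k with k ≠ j, lam j * lam k * (p j * q k - p k * q j)^2 / (lam j - lam k))
          / (lambda - lam j)
        = ∑ j, ((lam j)^2 * (p j)^2 / (lambda - lam j) / S1
            - S2 / S1^2 * (lam j * p j * p j / (lambda - lam j))
            + (∑ k with k ≠ j,
                lam j * lam k * (p j * q k - p k * q j)^2 / (lam j - lam k)) / (lambda - lam j)) :=
          Finset.sum_congr rfl fun j _ => by ring
      _ = (∑ j, (lam j)^2 * (p j)^2 / (lambda - lam j) / S1)
            - (∑ j, S2 / S1^2 * (lam j * p j * p j / (lambda - lam j)))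
            + ∑ j, (∑ k with k ≠ j,
                lam j * lam k * (p j * q k - p k * q j)^2 / (lam j - lam k)) / (lambda - lam j) := by
          rw [Finset.sum_add_distrib, Finset.sum_sub_distrib]
      _ = T / S1 - S2 / S1 ^ 2 * A + (A * B - C ^ 2) := by rw [e1, e2, ← hcross]
  rw [hRHS, hA']
  ring
end

section
/- Along the flow of the backward Neumann system p_x = q, q_x = −αp + (2⟨Λ²p,p⟩/⟨Λp,p⟩³)Λp − (1/⟨Λp,p⟩²)Λ²p, the quantity F_0 = ⟨Λ²p,p⟩/⟨Λp,p⟩² + ⟨q,q⟩ is conserved: d/dx F_0 = 0, provided ⟨p,p⟩ = 1 and ⟨p,q⟩ = 0 hold along the flow. -/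
open Finset

/-! Differentiating `F₀` along the flow, the terms produced by the potential
`⟨Λ²p,p⟩/⟨Λp,p⟩²` cancel exactly against the `Λp` and `Λ²p` components of `2⟨q, q_x⟩`,
leaving `dF₀/dx = -2α⟨p,q⟩`, which vanishes because `q` stays tangent to the sphere. -/

section NeumannFlow

variable {ι : Type*} [Fintype ι]

theorem hasDerivAt_sum_mul_sq (w : ι → ℝ) {f : ℝ → ι → ℝ} {f' : ι → ℝ} {x : ℝ}
    (hf : ∀ j, HasDerivAt (fun y => f y j) (f' j) x) :
    HasDerivAt (fun y => ∑ j, w j * f y j ^ 2) (2 * ∑ j, w j * f x j * f' j) x := by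
  rw [mul_sum]
  refine HasDerivAt.fun_sum fun j _ => ?_
  exact (((hf j).pow 2).const_mul (w j)).congr_deriv (by ring)

theorem hasDerivAt_sum_sq {f : ℝ → ι → ℝ} {f' : ι → ℝ} {x : ℝ}
    (hf : ∀ j, HasDerivAt (fun y => f y j) (f' j) x) :
    HasDerivAt (fun y => ∑ j, f y j ^ 2) (2 * ∑ j, f x j * f' j) x := by
  simpa using hasDerivAt_sum_mul_sq 1 hf

theorem hasDerivAt_backwardNeumann_F₀ (α : ℝ) (lam : ι → ℝ) {p q : ℝ → ι → ℝ} {x : ℝ}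
    (hΛpp : ∑ j, lam j * p x j ^ 2 ≠ 0)
    (hpx : ∀ j, HasDerivAt (fun y => p y j) (q x j) x)
    (hqx : ∀ j, HasDerivAt (fun y => q y j)
      (-α * p x j
        + (2 * (∑ i, lam i ^ 2 * p x i ^ 2) / (∑ i, lam i * p x i ^ 2) ^ 3) * (lam j * p x j)
        - (1 / (∑ i, lam i * p x i ^ 2) ^ 2) * (lam j ^ 2 * p x j)) x) :
    HasDerivAt (fun y =>
        (∑ j, lam j ^ 2 * p y j ^ 2) / (∑ j, lam j * p y j ^ 2) ^ 2 + ∑ j, q y j ^ 2)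
      (-2 * α * ∑ j, p x j * q x j) x := by
  have hA := hasDerivAt_sum_mul_sq (fun j => lam j ^ 2) hpx
  have hB := hasDerivAt_sum_mul_sq lam hpx
  have hC := hasDerivAt_sum_sq hqx
  refine ((hA.div (hB.pow 2) (pow_ne_zero 2 hΛpp)).add hC).congr_deriv ?_
  simp only [Pi.pow_apply]
  set A := ∑ i, lam i ^ 2 * p x i ^ 2
  set B := ∑ i, lam i * p x i ^ 2
  have hsplit : ∑ j, q x j * (-α * p x j + 2 * A / B ^ 3 * (lam j * p x j)
        - 1 / B ^ 2 * (lam j ^ 2 * p x j))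
      = -α * ∑ j, p x j * q x j + 2 * A / B ^ 3 * ∑ j, lam j * p x j * q x j
        - 1 / B ^ 2 * ∑ j, lam j ^ 2 * p x j * q x j := by
    simp only [mul_sum, ← sum_add_distrib, ← sum_sub_distrib]
    exact sum_congr rfl fun j _ => by ring
  rw [hsplit]
  field_simp
  ring

end NeumannFlow

theorem stmt_8_general (N : ℕ) (α : ℝ) (lam : Fin N → ℝ)
    (p q : ℝ → Fin N → ℝ)
    (hΛpp : ∀ x, ∑ j, lam j * (p x j)^2 ≠ 0)
    (hpx : ∀ x j, HasDerivAt (fun y => p y j) (q x j) x)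
    (hqx : ∀ x j, HasDerivAt (fun y => q y j)
      (-α * p x j
        + (2 * (∑ i, (lam i)^2 * (p x i)^2) / (∑ i, lam i * (p x i)^2)^3) * (lam j * p x j)
        - (1 / (∑ i, lam i * (p x i)^2)^2) * ((lam j)^2 * p x j)) x)
    (htangent : ∀ x, ∑ j, p x j * q x j = 0) :
    ∀ x, deriv (fun y =>
        (∑ j, (lam j)^2 * (p y j)^2) / (∑ j, lam j * (p y j)^2)^2
          + ∑ j, (q y j)^2) x = 0 := by
  intro x
  rw [(hasDerivAt_backwardNeumann_F₀ α lam (hΛpp x) (hpx x) (hqx x)).deriv, htangent x, mul_zero]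

theorem stmt_8 (N : ℕ) (α : ℝ) (lam : Fin N → ℝ)
    (hne : ∀ j, lam j ≠ 0) (hdist : Function.Injective lam)
    (p q : ℝ → Fin N → ℝ)
    (hΛpp : ∀ x, ∑ j, lam j * (p x j)^2 ≠ 0)
    (hpx : ∀ x j, HasDerivAt (fun y => p y j) (q x j) x)
    (hqx : ∀ x j, HasDerivAt (fun y => q y j)
      (-α * p x j
        + (2 * (∑ i, (lam i)^2 * (p x i)^2) / (∑ i, lam i * (p x i)^2)^3) * (lam j * p x j)
        - (1 / (∑ i, lam i * (p x i)^2)^2) * ((lam j)^2 * p x j)) x)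
    (hsphere : ∀ x, ∑ j, (p x j)^2 = 1)
    (htangent : ∀ x, ∑ j, p x j * q x j = 0) :
    ∀ x, deriv (fun y =>
        (∑ j, (lam j)^2 * (p y j)^2) / (∑ j, lam j * (p y j)^2)^2
          + ∑ j, (q y j)^2) x = 0 :=
  stmt_8_general N α lam p q hΛpp hpx hqx htangent
end
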